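/- arXiv:1111.4709 — 2 statements merged into one kernel-verified Lean document; each statement's English description precedes it below -/
import Mathlib

section
/- Let 𝒲 be a reduced cyclic word and (P,Q) ∈ 𝕃ℙ₁(𝒲). Then δ₁(P,Q) and δ₂(P,Q) are non-empty reduced cyclic words. -/
/-!
Two occurrences of subwords of `𝒲` can be realised by a single cut `𝒲 = c(AB)` such that the
occurrence of `P` ends with the first letter of `A` and that of `Q` with the first letter of `B`. In types (1) and (2) the cut is non-trivial since
`P` and `Q` differ before their last letters, and each piece is cyclically reduced: its only new
adjacency joins the letter before `q₂` to `p₂` (or the letter before `p₂` to `q₂`), which is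
reduced by the distinctness of the letters of `p̄₁q̄₁p₂q₂` in type (1) and because `Yp₂` and
`Yq₂` are parts of `P` and `Q` in type (2). In type (3) the occurrences of `Y` and `Ȳ` cannot
overlap, as the overlap `X` would be a non-empty freely reduced word with `X̄ = X`, and cannot
abut, by `p₁ ≠ q̄₂` and `p₂ ≠ q̄₁`; so both arcs between them are non-empty, and their new
adjacencies are exactly these two pairs.
-/

open List

namespace CyclicWords

/-- A letter of the alphabet `𝔸ₙ = {a₁,…,aₙ, ā₁,…,āₙ}`: a generator index together
with a Boolean recording whether the letter is barred. -/
abbrev Letter (n : ℕ) := Bool × Fin n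

/-- The involution `x ↦ x̄` on letters. -/
def Letter.bar {n : ℕ} (x : Letter n) : Letter n := (!x.1, x.2)

/-- A linear word: a finite sequence of letters. -/
abbrev Word (n : ℕ) := List (Letter n)

/-- `W̄ = x̄ₘ ⋯ x̄₁ x̄₀` for `W = x₀x₁⋯xₘ`. -/
def Word.bar {n : ℕ} (W : Word n) : Word n := (W.map Letter.bar).reverse

/-- `Wᵏ`, the concatenation of `k` copies of `W`. -/
def wpow {n : ℕ} (W : Word n) (k : ℕ) : Word n := (List.replicate k W).flatten

/-- A linear word is freely reduced when consecutive letters are never inverse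
to each other. -/
def FreelyReduced {n : ℕ} (W : Word n) : Prop :=
  W.Chain' (fun a b => b ≠ Letter.bar a)

/-- A cyclic word: an equivalence class of linear words under cyclic rotation. -/
abbrev CWord (n : ℕ) := Cycle (Letter n)

/-- `c(W)`, the cyclic word represented by the linear word `W`. -/
def cyc {n : ℕ} (W : Word n) : CWord n := ↑W

/-- The length of a cyclic word. -/
def clen {n : ℕ} (𝒲 : CWord n) : ℕ := 𝒲.length

/-- A cyclic word is reduced if it is non-empty and all of its linear
representatives are freely reduced. -/
def CReduced {n : ℕ} (𝒲 : CWord n) : Prop :=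
  𝒲 ≠ Cycle.nil ∧ ∀ W : Word n, cyc W = 𝒲 → FreelyReduced W

/-- `P` is a (linear) subword of the cyclic word `𝒲`, i.e. a linear subword of
one of its linear representatives. -/
def Subword {n : ℕ} (P : Word n) (𝒲 : CWord n) : Prop :=
  ∃ W : Word n, cyc W = 𝒲 ∧ P <:+: W

/-- `P` is a subword of the power `𝒲ʲ`. -/
def SubwordPow {n : ℕ} (P : Word n) (𝒲 : CWord n) (j : ℕ) : Prop :=
  ∃ W : Word n, cyc W = 𝒲 ∧ P <:+: wpow W j

/-- A surface symbol: a reduced cyclic word in which every letter of `𝔸ₙ`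
appears exactly once. -/
def SurfaceSymbol {n : ℕ} (𝒪 : CWord n) : Prop :=
  CReduced 𝒪 ∧ ∃ O : Word n, cyc O = 𝒪 ∧ O.Nodup ∧ ∀ x : Letter n, x ∈ O

/-- `𝒲` is reduced and its (distinct) letters embed into `𝒪` preserving the
cyclic order. -/
def OrientPos {n : ℕ} (𝒪 𝒲 : CWord n) : Prop :=
  CReduced 𝒲 ∧ ∃ W O : Word n, cyc W = 𝒲 ∧ cyc O = 𝒪 ∧ W.Sublist O

/-- `𝒲` is reduced and its (distinct) letters embed into `𝒪` reversing the
cyclic order. -/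
def OrientNeg {n : ℕ} (𝒪 𝒲 : CWord n) : Prop :=
  CReduced 𝒲 ∧ ∃ W O : Word n, cyc W = 𝒲 ∧ cyc O = 𝒪 ∧ W.Sublist O.reverse

open Classical in
/-- The number `o(𝒲) ∈ {-1,0,1}` associated to a cyclic word `𝒲`. -/
noncomputable def o {n : ℕ} (𝒪 𝒲 : CWord n) : ℤ :=
  if OrientPos 𝒪 𝒲 then 1 else if OrientNeg 𝒪 𝒲 then -1 else 0

/-- Condition (1) of the definition of `𝒪`-linked pairs. -/
def LinkedType1 {n : ℕ} (𝒪 : CWord n) (P Q : Word n) : Prop :=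
  ∃ p₁ p₂ q₁ q₂ : Letter n, P = [p₁, p₂] ∧ Q = [q₁, q₂] ∧
    o 𝒪 (cyc [Letter.bar p₁, Letter.bar q₁, p₂, q₂]) ≠ 0

/-- Condition (2) of the definition of `𝒪`-linked pairs (`x₁`, `x₂` denote the
first and last letters of `Y`). -/
def LinkedType2 {n : ℕ} (𝒪 : CWord n) (P Q : Word n) : Prop :=
  ∃ (p₁ p₂ q₁ q₂ : Letter n) (Y : Word n), Y ≠ [] ∧
    P = p₁ :: Y ++ [p₂] ∧ Q = q₁ :: Y ++ [q₂] ∧ p₁ ≠ q₁ ∧ p₂ ≠ q₂ ∧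
    ∀ x₁ x₂ : Letter n, Y.head? = some x₁ → Y.getLast? = some x₂ →
      o 𝒪 (cyc [Letter.bar p₁, Letter.bar q₁, x₁]) = o 𝒪 (cyc [p₂, q₂, Letter.bar x₂])

/-- Condition (3) of the definition of `𝒪`-linked pairs. -/
def LinkedType3 {n : ℕ} (𝒪 : CWord n) (P Q : Word n) : Prop :=
  ∃ (p₁ p₂ q₁ q₂ : Letter n) (Y : Word n), Y ≠ [] ∧
    P = p₁ :: Y ++ [p₂] ∧ Q = q₁ :: Word.bar Y ++ [q₂] ∧
    p₁ ≠ Letter.bar q₂ ∧ p₂ ≠ Letter.bar q₁ ∧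
    ∀ x₁ x₂ : Letter n, Y.head? = some x₁ → Y.getLast? = some x₂ →
      o 𝒪 (cyc [q₂, Letter.bar p₁, x₁]) = o 𝒪 (cyc [Letter.bar q₁, p₂, Letter.bar x₂])

/-- The ordered pair `(P,Q)` is `𝒪`-linked. -/
def IsLinked {n : ℕ} (𝒪 : CWord n) (P Q : Word n) : Prop :=
  FreelyReduced P ∧ FreelyReduced Q ∧ 2 ≤ P.length ∧ 2 ≤ Q.length ∧
    (LinkedType1 𝒪 P Q ∨ LinkedType2 𝒪 P Q ∨ LinkedType3 𝒪 P Q)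

open Classical in
/-- The sign of a linked pair `(P,Q)`. -/
noncomputable def sign {n : ℕ} (𝒪 : CWord n) (P Q : Word n) : ℤ :=
  match P, Q with
  | p₁ :: ps, q₁ :: qs =>
    match ps.getLast?, qs.getLast?, ps.head? with
    | some p₂, some q₂, some x₁ =>
      if LinkedType1 𝒪 (p₁ :: ps) (q₁ :: qs) then
        o 𝒪 (cyc [Letter.bar p₁, Letter.bar q₁, p₂, q₂])
      else if LinkedType2 𝒪 (p₁ :: ps) (q₁ :: qs) then
        o 𝒪 (cyc [Letter.bar p₁, Letter.bar q₁, x₁])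
      else if LinkedType3 𝒪 (p₁ :: ps) (q₁ :: qs) then
        o 𝒪 (cyc [q₂, Letter.bar p₁, x₁])
      else 0
    | _, _, _ => 0
  | _, _ => 0

/-- `𝕃ℙ₁(𝒲)`: `(P,Q)` is an `𝒪`-linked pair of subwords of `𝒲`. -/
def LP1 {n : ℕ} (𝒪 𝒲 : CWord n) (P Q : Word n) : Prop :=
  IsLinked 𝒪 P Q ∧ Subword P 𝒲 ∧ Subword Q 𝒲

/-- `𝕃ℙ₂(𝒱,𝒲)`: `(P,Q)` is an `𝒪`-linked pair with `P` a subword of `𝒱ʲ`,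
`Q` a subword of `𝒲ᵏ` in the appropriate length windows. -/
def LP2 {n : ℕ} (𝒪 𝒱 𝒲 : CWord n) (P Q : Word n) : Prop :=
  IsLinked 𝒪 P Q ∧
    ∃ j k : ℕ, 0 < j ∧ 0 < k ∧ SubwordPow P 𝒱 j ∧ SubwordPow Q 𝒲 k ∧
      (j - 1) * clen 𝒱 < P.length ∧ P.length ≤ j * clen 𝒱 ∧
      (k - 1) * clen 𝒲 < Q.length ∧ Q.length ≤ k * clen 𝒲

/-- The cut data for `δ` when `(P,Q)` has type (1) or (2): two cuts of `𝒲`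
producing `W₁` (starting at the occurrence of `p₂`, the last letter of `P`) and
`W₂` (starting at the occurrence of `q₂`, the last letter of `Q`). -/
def DeltaPair12 {n : ℕ} (𝒪 𝒲 : CWord n) (P Q W₁ W₂ : Word n) : Prop :=
  (LinkedType1 𝒪 P Q ∨ LinkedType2 𝒪 P Q) ∧
  𝒲 = cyc (W₁ ++ W₂) ∧
  (∃ (P' : Word n) (p₂ : Letter n), P = P' ++ [p₂] ∧ W₁.head? = some p₂ ∧
      P' <:+ W₁ ++ W₂) ∧
  (∃ (Q' : Word n) (q₂ : Letter n), Q = Q' ++ [q₂] ∧ W₂.head? = some q₂ ∧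
      Q' <:+ W₂ ++ W₁)

/-- The cut data for `δ` when `(P,Q)` has type (3): `W₁` runs from `p₂` to
`q₁`, and `W₂` from `q₂` to `p₁`. -/
def DeltaPair3 {n : ℕ} (𝒪 𝒲 : CWord n) (P Q W₁ W₂ : Word n) : Prop :=
  LinkedType3 𝒪 P Q ∧
  ∃ (p₁ p₂ q₁ q₂ : Letter n) (Y Y' : Word n), Y ≠ [] ∧ Y' ≠ [] ∧
    P = p₁ :: Y ++ [p₂] ∧ Q = q₁ :: Y' ++ [q₂] ∧
    W₁.head? = some p₂ ∧ W₁.getLast? = some q₁ ∧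
    W₂.head? = some q₂ ∧ W₂.getLast? = some p₁ ∧
    𝒲 = cyc (W₁ ++ Y' ++ W₂ ++ Y)

/-- The words `W₁`, `W₂` obtained by cutting `𝒲` along the linked pair `(P,Q)`. -/
def DeltaPair {n : ℕ} (𝒪 𝒲 : CWord n) (P Q W₁ W₂ : Word n) : Prop :=
  DeltaPair12 𝒪 𝒲 P Q W₁ W₂ ∨ DeltaPair3 𝒪 𝒲 P Q W₁ W₂

open Classical in
/-- A choice of the pair of linear words obtained by cutting `𝒲` along `(P,Q)`. -/
noncomputable def deltaW {n : ℕ} (𝒪 𝒲 : CWord n) (P Q : Word n) : Word n × Word n :=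
  if h : ∃ W : Word n × Word n, DeltaPair 𝒪 𝒲 P Q W.1 W.2 then h.choose else ([], [])

/-- The cyclic word `δ₁(P,Q)`. -/
noncomputable def delta1 {n : ℕ} (𝒪 𝒲 : CWord n) (P Q : Word n) : CWord n :=
  cyc (deltaW 𝒪 𝒲 P Q).1

/-- The cyclic word `δ₂(P,Q)`. -/
noncomputable def delta2 {n : ℕ} (𝒪 𝒲 : CWord n) (P Q : Word n) : CWord n :=
  cyc (deltaW 𝒪 𝒲 P Q).2

/-- `W₁` is the linear representative of `↑W₁` obtained by cutting immediately
before (the occurrence of) the last letter of `P`: `P` occurs (in a power)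
ending exactly at the cut. -/
def CutEnds {n : ℕ} (W₁ P : Word n) : Prop :=
  ∃ (P' : Word n) (p₂ : Letter n) (j : ℕ),
    P = P' ++ [p₂] ∧ W₁.head? = some p₂ ∧ P' <:+ wpow W₁ j

/-- The data for `γ(P,Q)` when `(P,Q) ∈ 𝕃ℙ₂(𝒱,𝒲)` has type (1) or (2):
`γ(P,Q) = c(V₁W₁)` where `V₁`, `W₁` are the representatives of `𝒱`, `𝒲` obtained
by cutting immediately before `p₂`, resp. `q₂`. -/
def GammaPair12 {n : ℕ} (𝒪 𝒱 𝒲 : CWord n) (P Q : Word n) (G : CWord n) : Prop :=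
  (LinkedType1 𝒪 P Q ∨ LinkedType2 𝒪 P Q) ∧
  ∃ V₁ W₁ : Word n, cyc V₁ = 𝒱 ∧ cyc W₁ = 𝒲 ∧ CutEnds V₁ P ∧ CutEnds W₁ Q ∧
    G = cyc (V₁ ++ W₁)

/-- The data for `γ(P,Q)` when `(P,Q) ∈ 𝕃ℙ₂(𝒱,𝒲)` has type (3):
`V₁` is the subword of `𝒱` starting right after the end of `Y` and ending right
before the first letter of `Y` (whose footprint in `𝒱` is the arc `U`), and
similarly `W₁` for `Ȳ` in `𝒲`; then `γ(P,Q) = c(V₁W₁)`. -/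
def GammaPair3 {n : ℕ} (𝒪 𝒱 𝒲 : CWord n) (P Q : Word n) (G : CWord n) : Prop :=
  LinkedType3 𝒪 P Q ∧
  ∃ (p₁ p₂ q₁ q₂ : Letter n) (Y V₁ W₁ U U' : Word n) (j k : ℕ),
    P = p₁ :: Y ++ [p₂] ∧ Q = q₁ :: Word.bar Y ++ [q₂] ∧
    V₁.head? = some p₂ ∧ V₁.getLast? = some p₁ ∧
    W₁.head? = some q₂ ∧ W₁.getLast? = some q₁ ∧
    𝒱 = cyc (U ++ V₁) ∧ Y <+: wpow (U ++ V₁) j ∧ Y.length % clen 𝒱 = U.length ∧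
    𝒲 = cyc (U' ++ W₁) ∧ Word.bar Y <+: wpow (U' ++ W₁) k ∧
      (Word.bar Y).length % clen 𝒲 = U'.length ∧
    G = cyc (V₁ ++ W₁)

/-- `G` is the cyclic word `γ(P,Q)` associated to `(P,Q) ∈ 𝕃ℙ₂(𝒱,𝒲)`. -/
def GammaPair {n : ℕ} (𝒪 𝒱 𝒲 : CWord n) (P Q : Word n) (G : CWord n) : Prop :=
  GammaPair12 𝒪 𝒱 𝒲 P Q G ∨ GammaPair3 𝒪 𝒱 𝒲 P Q G

open Classical in
/-- A choice of the cyclic word `γ(P,Q)` for `(P,Q) ∈ 𝕃ℙ₂(𝒱,𝒲)`. -/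
noncomputable def gamma {n : ℕ} (𝒪 𝒱 𝒲 : CWord n) (P Q : Word n) : CWord n :=
  if h : ∃ G : CWord n, GammaPair 𝒪 𝒱 𝒲 P Q G then h.choose else Cycle.nil

/-- The set of non-empty reduced cyclic words, the basis of `𝕍`. -/
def RedCyc (n : ℕ) := {𝒲 : CWord n // CReduced 𝒲}

instance {n : ℕ} [NeZero n] : Inhabited (RedCyc n) :=
  ⟨⟨cyc [default], by
    constructor
    · intro h
      have h' : ([(default : Letter n)] : Word n) = [] := (Cycle.coe_eq_nil _).mp h
      simp at h'
    · intro W hW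
      have h1 : W ~r [(default : Letter n)] := Cycle.coe_eq_coe.mp hW
      have h2 : W = [(default : Letter n)] := List.perm_singleton.mp h1.perm
      rw [h2]
      exact List.isChain_singleton _⟩⟩

open Classical in
/-- View a cyclic word as a basis element of `𝕍` (junk value if not reduced). -/
noncomputable def toRed {n : ℕ} [NeZero n] (c : CWord n) : RedCyc n :=
  if h : CReduced c then ⟨c, h⟩ else default


section Words

variable {n : ℕ}

@[simp] lemma Letter.bar_bar (x : Letter n) : Letter.bar (Letter.bar x) = x := by
  simp [Letter.bar]

lemma Letter.bar_ne_self (x : Letter n) : Letter.bar x ≠ x := by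
  obtain ⟨_ | _, _⟩ := x <;> simp [Letter.bar]

lemma Letter.eq_bar_comm {x y : Letter n} : x = Letter.bar y ↔ y = Letter.bar x := by
  constructor <;> rintro rfl <;> simp

@[simp] lemma Word.bar_append (X Y : Word n) : Word.bar (X ++ Y) = Word.bar Y ++ Word.bar X := by
  simp [Word.bar]

@[simp] lemma Word.bar_bar (X : Word n) : Word.bar (Word.bar X) = X := by
  simp [Word.bar, Function.comp_def]

@[simp] lemma Word.length_bar (X : Word n) : (Word.bar X).length = X.length := by
  simp [Word.bar]

@[simp] lemma Word.bar_eq_nil {X : Word n} : Word.bar X = [] ↔ X = [] := by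
  simp [Word.bar]

lemma FreelyReduced.bar {X : Word n} (hX : FreelyReduced X) : FreelyReduced (Word.bar X) := by
  change List.IsChain _ _ at hX ⊢
  simp only [Word.bar, List.isChain_reverse, List.isChain_map]
  refine hX.imp fun a b hab h => hab ?_
  simpa using h.symm

/-- The middle letter (odd length) or the middle pair of letters (even length) of a
word equal to its own inverse would be a letter equal to its inverse, or a cancelling pair. -/
lemma Word.bar_ne_self {X : Word n} (hX : FreelyReduced X) (hne : X ≠ []) : Word.bar X ≠ X := by
  induction X using List.bidirectionalRec with
  | nil => exact absurd rfl hne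
  | singleton a => simpa [Word.bar] using Letter.bar_ne_self a
  | cons_append a l b ih =>
    intro h
    have hbar : Word.bar (a :: (l ++ [b])) = Letter.bar b :: (Word.bar l ++ [Letter.bar a]) := by
      simp [Word.bar]
    rw [hbar, List.cons.injEq] at h
    obtain ⟨-, hl⟩ := h
    obtain ⟨hlbar, -⟩ := List.append_inj' hl rfl
    rcases eq_or_ne l [] with rfl | hl₀
    · exact List.isChain_pair.mp hX (by simpa [Word.bar] using hl.symm)
    · exact ih (hX.infix ⟨[a], [b], by simp⟩) hl₀ hlbar

end Words

section Cyclic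

variable {n : ℕ}

lemma _root_.List.IsRotated.exists_append {α : Type*} {l l' : List α} (h : l ~r l') :
    ∃ A B, l = A ++ B ∧ l' = B ++ A := by
  obtain ⟨k, rfl⟩ := h
  exact ⟨_, _, (List.take_append_drop (k % l.length) l).symm,
    List.rotate_eq_drop_append_take_mod⟩

lemma _root_.List.IsRotated.infix_append_self {α : Type*} {l l' : List α} (h : l ~r l') :
    l' <:+: l ++ l := by
  obtain ⟨A, B, rfl, rfl⟩ := h.exists_append
  exact ⟨A, B, by simp⟩

lemma cReduced_cyc {L : Word n} {a b : Letter n} (hL : FreelyReduced L) (ha : L.head? = some a)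
    (hb : L.getLast? = some b) (hab : a ≠ Letter.bar b) : CReduced (cyc L) := by
  have hLL : FreelyReduced (L ++ L) := by
    refine List.IsChain.append hL hL ?_
    simp_all
  refine ⟨fun h => ?_, fun W hW => hLL.infix (Cycle.coe_eq_coe.mp hW).symm.infix_append_self⟩
  simp_all [cyc]

lemma cReduced_cyc_of_cut {W₁ W₂ Q' : Word n} {p : Letter n} (hW : FreelyReduced (W₁ ++ W₂))
    (hp : W₁.head? = some p) (hQ' : Q' <:+ W₂ ++ W₁) (hQ'ne : Q' ≠ [])
    (hclose : FreelyReduced (Q' ++ [p])) : CReduced (cyc W₁) := by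
  obtain ⟨b, hb⟩ := Option.ne_none_iff_exists'.mp (mt List.getLast?_eq_none_iff.mp hQ'ne)
  have hW₁ : W₁ ≠ [] := by rintro rfl; simp at hp
  have hlast : W₁.getLast? = some b := by
    obtain ⟨T, hT⟩ := hQ'
    rw [← List.getLast?_append_of_ne_nil W₂ hW₁, ← hT, List.getLast?_append_of_ne_nil T hQ'ne, hb]
  refine cReduced_cyc (hW.prefix (List.prefix_append W₁ W₂)) hp hlast ?_
  exact (List.isChain_append.mp hclose).2.2 b hb p rfl

lemma Subword.exists_cyc_cons {P : Word n} {x : Letter n} {𝒲 : CWord n}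
    (h : Subword (P ++ [x]) 𝒲) : ∃ S, cyc (x :: S) = 𝒲 ∧ P <:+ x :: S := by
  obtain ⟨W, rfl, A, B, rfl⟩ := h
  refine ⟨B ++ A ++ P, Cycle.coe_eq_coe.mpr ?_, ⟨x :: (B ++ A), by simp⟩⟩
  simpa using (List.isRotated_append (l := x :: B) (l' := A ++ P))

lemma exists_cut_of_subwords {𝒲 : CWord n} {P Q : Word n} {p q : Letter n}
    (hP : Subword (P ++ [p]) 𝒲) (hQ : Subword (Q ++ [q]) 𝒲) :
    ∃ A B : Word n, 𝒲 = cyc (A ++ B) ∧ (A ++ B).head? = some p ∧ P <:+ A ++ B ∧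
      (B ++ A).head? = some q ∧ Q <:+ B ++ A := by
  obtain ⟨S, rfl, hPS⟩ := hP.exists_cyc_cons
  obtain ⟨T, hT, hQT⟩ := hQ.exists_cyc_cons
  obtain ⟨A, B, hAB, hBA⟩ := (Cycle.coe_eq_coe.mp hT.symm).exists_append
  exact ⟨A, B, by rw [← hAB], by rw [← hAB]; rfl, hAB ▸ hPS, by rw [← hBA]; rfl, hBA ▸ hQT⟩

end Cyclic

section Cuts

variable {n : ℕ}

lemma exists_cut_of_subwords_of_ne {𝒲 : CWord n} {P Q : Word n} {p q : Letter n}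
    (hP : Subword (P ++ [p]) 𝒲) (hQ : Subword (Q ++ [q]) 𝒲) (hlen : P.length = Q.length)
    (hne : P ≠ Q) :
    ∃ W₁ W₂ : Word n, 𝒲 = cyc (W₁ ++ W₂) ∧ W₁.head? = some p ∧ P <:+ W₁ ++ W₂ ∧
      W₂.head? = some q ∧ Q <:+ W₂ ++ W₁ := by
  obtain ⟨A, B, hcyc, hp, hPAB, hq, hQBA⟩ := exists_cut_of_subwords hP hQ
  have htrivial : A ++ B = B ++ A → False := fun h =>
    hne <| (List.suffix_of_suffix_length_le hPAB (h ▸ hQBA) hlen.le).eq_of_length hlen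
  have hA : A ≠ [] := by rintro rfl; simp at htrivial
  have hB : B ≠ [] := by rintro rfl; simp at htrivial
  refine ⟨A, B, hcyc, ?_, hPAB, ?_, hQBA⟩
  · rwa [List.head?_append_of_ne_nil _ hA] at hp
  · rwa [List.head?_append_of_ne_nil _ hB] at hq

/-- An occurrence of `Y` ending where `A` begins and one of `Ȳ` ending where `B` begins
cannot overlap: the overlap `X` would satisfy `X̄ = X`. -/
lemma length_le_of_suffix_of_bar_suffix {Y A B : Word n} (hY : FreelyReduced Y)
    (h₁ : Y <:+ A ++ B) (h₂ : Word.bar Y <:+ B ++ A) : Y.length ≤ A.length := by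
  by_contra! hA
  obtain ⟨X, hX⟩ : A <:+ Word.bar Y :=
    List.suffix_of_suffix_length_le (List.suffix_append B A) h₂ (by simp; omega)
  have hXlen : X.length + A.length = Y.length := by simpa using congrArg List.length hX
  have hXY : X <:+ Y := by
    have hXB : X <:+ B := List.suffix_append_self_iff.mp (hX ▸ h₂)
    exact List.suffix_of_suffix_length_le (hXB.trans (List.suffix_append A B)) h₁ (by omega)
  obtain ⟨Y', rfl⟩ := hXY
  rw [Word.bar_append] at hX
  have hXbar : Word.bar X = X := (List.append_inj hX.symm (by simp)).1
  exact Word.bar_ne_self (hY.suffix (List.suffix_append Y' X))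
    (List.ne_nil_of_length_pos (by omega)) hXbar

lemma head?_eq_bar_of_length_eq {Y A B : Word n} {x : Letter n} (hY : Y ≠ [])
    (h₁ : Y <:+ A ++ B) (h₂ : x :: Word.bar Y <:+ B ++ A) (hA : A.length = Y.length) :
    (A ++ B).head? = some (Letter.bar x) := by
  have hAY : A = Word.bar Y :=
    (List.suffix_of_suffix_length_le (List.suffix_append B A)
      ((List.suffix_cons x _).trans h₂) (by simp [hA])).eq_of_length (by simp [hA])
  subst hAY
  have hxB : [x] <:+ B := List.suffix_append_self_iff.mp h₂
  obtain ⟨Y', rfl⟩ : [x] <:+ Y :=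
    List.suffix_of_suffix_length_le (hxB.trans (List.suffix_append _ B)) h₁
      (List.length_pos_iff.mpr hY)
  simp [Word.bar]

lemma _root_.List.exists_eq_append_of_cons_suffix {α : Type*} {x : α} {Z A B : List α}
    (h : x :: Z <:+ B ++ A) (hA : Z.length < A.length) :
    ∃ W, A = W ++ Z ∧ W.getLast? = some x := by
  obtain ⟨V, rfl⟩ := List.suffix_of_suffix_length_le h (List.suffix_append B A) (by simpa)
  exact ⟨V ++ [x], by simp, by simp⟩

lemma exists_cut_of_subwords_bar {𝒲 : CWord n} {p₁ p₂ q₁ q₂ : Letter n} {Y : Word n}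
    (hY : FreelyReduced Y) (hYne : Y ≠ []) (hP : Subword (p₁ :: Y ++ [p₂]) 𝒲)
    (hQ : Subword (q₁ :: Word.bar Y ++ [q₂]) 𝒲) (hne₁ : p₁ ≠ Letter.bar q₂)
    (hne₂ : p₂ ≠ Letter.bar q₁) :
    ∃ W₁ W₂ : Word n, W₁.head? = some p₂ ∧ W₁.getLast? = some q₁ ∧
      W₂.head? = some q₂ ∧ W₂.getLast? = some p₁ ∧ 𝒲 = cyc (W₁ ++ Word.bar Y ++ W₂ ++ Y) := by
  obtain ⟨A, B, hcyc, hp, hPAB, hq, hQBA⟩ := exists_cut_of_subwords hP hQ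
  have hY₁ : Y <:+ A ++ B := (List.suffix_cons _ _).trans hPAB
  have hY₂ : Word.bar Y <:+ B ++ A := (List.suffix_cons _ _).trans hQBA
  have hA : Y.length < A.length := by
    refine (length_le_of_suffix_of_bar_suffix hY hY₁ hY₂).lt_of_ne fun h => hne₂ ?_
    simpa [hp] using head?_eq_bar_of_length_eq hYne hY₁ hQBA h.symm
  have hB : Y.length < B.length := by
    have hPAB' : p₁ :: Word.bar (Word.bar Y) <:+ A ++ B := by simpa using hPAB
    refine (by simpa using length_le_of_suffix_of_bar_suffix hY.bar hY₂ (by simpa using hY₁) :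
      Y.length ≤ B.length).lt_of_ne fun h => hne₁ ?_
    have := head?_eq_bar_of_length_eq (by simpa using hYne) hY₂ hPAB' (by simpa using h.symm)
    exact Letter.eq_bar_comm.mp (by simpa [hq] using this)
  obtain ⟨W₁, rfl, hW₁⟩ := List.exists_eq_append_of_cons_suffix hQBA (by simpa using hA)
  obtain ⟨W₂, rfl, hW₂⟩ := List.exists_eq_append_of_cons_suffix hPAB hB
  have hW₁ne : W₁ ≠ [] := by rintro rfl; simp at hW₁
  have hW₂ne : W₂ ≠ [] := by rintro rfl; simp at hW₂
  refine ⟨W₁, W₂, ?_, hW₁, ?_, hW₂, by simpa using hcyc⟩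
  · simpa [List.head?_append_of_ne_nil _ hW₁ne] using hp
  · simpa [List.head?_append_of_ne_nil _ hW₂ne] using hq

end Cuts

section LinkedPairs

variable {n : ℕ} {𝒪 : CWord n} {P Q : Word n}

lemma nodup_of_o_ne_zero (h𝒪 : SurfaceSymbol 𝒪) {L : Word n} (h : o 𝒪 (cyc L) ≠ 0) :
    L.Nodup := by
  obtain ⟨-, O₀, hO₀, hO₀nd, -⟩ := h𝒪
  have key : ∀ W O : Word n, cyc W = cyc L → cyc O = 𝒪 → W <+ O ∨ W <+ O.reverse → L.Nodup := by
    intro W O hW hO hWO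
    have hOnd : O.Nodup := (Cycle.coe_eq_coe.mp (hO.trans hO₀.symm)).nodup_iff.mpr hO₀nd
    refine (Cycle.coe_eq_coe.mp hW).nodup_iff.mp ?_
    exact hWO.elim (·.nodup hOnd) (·.nodup (List.nodup_reverse.mpr hOnd))
  unfold o at h
  split_ifs at h with hpos hneg
  · obtain ⟨-, W, O, hW, hO, hWO⟩ := hpos
    exact key W O hW hO (.inl hWO)
  · obtain ⟨-, W, O, hW, hO, hWO⟩ := hneg
    exact key W O hW hO (.inr hWO)
  · exact absurd rfl h

lemma exists_split_of_linkedType12 (h𝒪 : SurfaceSymbol 𝒪) (hP : FreelyReduced P)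
    (hQ : FreelyReduced Q) (h : LinkedType1 𝒪 P Q ∨ LinkedType2 𝒪 P Q) :
    ∃ (P' Q' : Word n) (p₂ q₂ : Letter n), P = P' ++ [p₂] ∧ Q = Q' ++ [q₂] ∧
      P'.length = Q'.length ∧ P' ≠ Q' ∧
      FreelyReduced (Q' ++ [p₂]) ∧ FreelyReduced (P' ++ [q₂]) := by
  rcases h with ⟨p₁, p₂, q₁, q₂, rfl, rfl, ho⟩ | ⟨p₁, p₂, q₁, q₂, Y, hY, rfl, rfl, hpq, -, -⟩
  · have hnd := nodup_of_o_ne_zero h𝒪 ho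
    simp only [List.nodup_cons, List.mem_cons, List.not_mem_nil, or_false, not_or] at hnd
    refine ⟨[p₁], [q₁], p₂, q₂, rfl, rfl, rfl, ?_, ?_, ?_⟩
    · rintro ⟨⟩
      exact hnd.1.1 rfl
    · exact List.isChain_pair.mpr fun h => hnd.2.1.1 h.symm
    · exact List.isChain_pair.mpr fun h => hnd.1.2.2 h.symm
  · refine ⟨p₁ :: Y, q₁ :: Y, p₂, q₂, rfl, rfl, rfl, by simpa using hpq, ?_, ?_⟩
    · exact List.IsChain.append_overlap (l₁ := [q₁]) (hQ.prefix ⟨[q₂], by simp⟩)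
        (hP.suffix ⟨[p₁], by simp⟩) hY
    · exact List.IsChain.append_overlap (l₁ := [p₁]) (hP.prefix ⟨[p₂], by simp⟩)
        (hQ.suffix ⟨[q₁], by simp⟩) hY

end LinkedPairs

section Delta

variable {n : ℕ} {𝒪 𝒲 : CWord n} {P Q W₁ W₂ : Word n}

lemma DeltaPair12.cReduced (h𝒪 : SurfaceSymbol 𝒪) (hW : CReduced 𝒲) (hP : FreelyReduced P)
    (hQ : FreelyReduced Q) (hD : DeltaPair12 𝒪 𝒲 P Q W₁ W₂) :
    CReduced (cyc W₁) ∧ CReduced (cyc W₂) := by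
  obtain ⟨h12, rfl, ⟨P₀, p₀, hP₀, hp₀, hP₀W⟩, ⟨Q₀, q₀, hQ₀, hq₀, hQ₀W⟩⟩ := hD
  obtain ⟨P', Q', p₂, q₂, rfl, rfl, hlen, hne, hcloseQ, hcloseP⟩ :=
    exists_split_of_linkedType12 h𝒪 hP hQ h12
  obtain ⟨rfl, ⟨⟩⟩ := List.append_inj' hP₀ rfl
  obtain ⟨rfl, ⟨⟩⟩ := List.append_inj' hQ₀ rfl
  have hP'ne : P' ≠ [] := by rintro rfl; exact hne (List.eq_nil_of_length_eq_zero hlen.symm).symm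
  have hQ'ne : Q' ≠ [] := by rintro rfl; exact hne (List.eq_nil_of_length_eq_zero hlen)
  have hW₂₁ : FreelyReduced (W₂ ++ W₁) := hW.2 _ (Cycle.coe_eq_coe.mpr List.isRotated_append)
  exact ⟨cReduced_cyc_of_cut (hW.2 _ rfl) hp₀ hQ₀W hQ'ne hcloseQ,
    cReduced_cyc_of_cut hW₂₁ hq₀ hP₀W hP'ne hcloseP⟩

lemma DeltaPair3.cReduced (hW : CReduced 𝒲) (hD : DeltaPair3 𝒪 𝒲 P Q W₁ W₂) :
    CReduced (cyc W₁) ∧ CReduced (cyc W₂) := by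
  obtain ⟨⟨p₁', p₂', q₁', q₂', Y₀, -, hP₀, hQ₀, hne₁, hne₂, -⟩,
    p₁, p₂, q₁, q₂, Y, Y', -, -, rfl, rfl, hW₁h, hW₁l, hW₂h, hW₂l, rfl⟩ := hD
  simp only [List.cons_append, List.cons.injEq, List.append_singleton_inj] at hP₀ hQ₀
  obtain ⟨rfl, -, rfl⟩ := hP₀
  obtain ⟨rfl, -, rfl⟩ := hQ₀
  have hfr : FreelyReduced (W₁ ++ Y' ++ W₂ ++ Y) := hW.2 _ rfl
  exact ⟨cReduced_cyc (hfr.infix ⟨[], Y' ++ W₂ ++ Y, by simp⟩) hW₁h hW₁l hne₂,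
    cReduced_cyc (hfr.infix ⟨W₁ ++ Y', Y, by simp⟩) hW₂h hW₂l (hne₁ ∘ Letter.eq_bar_comm.mp)⟩

lemma DeltaPair.cReduced (h𝒪 : SurfaceSymbol 𝒪) (hW : CReduced 𝒲) (hP : FreelyReduced P)
    (hQ : FreelyReduced Q) : DeltaPair 𝒪 𝒲 P Q W₁ W₂ → CReduced (cyc W₁) ∧ CReduced (cyc W₂)
  | .inl hD => hD.cReduced h𝒪 hW hP hQ
  | .inr hD => hD.cReduced hW

lemma exists_deltaPair (h𝒪 : SurfaceSymbol 𝒪) (h : LP1 𝒪 𝒲 P Q) :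
    ∃ W : Word n × Word n, DeltaPair 𝒪 𝒲 P Q W.1 W.2 := by
  obtain ⟨⟨hP, hQ, -, -, hlink⟩, hPW, hQW⟩ := h
  rcases or_assoc.mpr hlink with h12 | h3
  · obtain ⟨P', Q', p₂, q₂, rfl, rfl, hlen, hne, -, -⟩ :=
      exists_split_of_linkedType12 h𝒪 hP hQ h12
    obtain ⟨W₁, W₂, hcyc, hp, hPW', hq, hQW'⟩ := exists_cut_of_subwords_of_ne hPW hQW hlen hne
    exact ⟨(W₁, W₂), .inl ⟨h12, hcyc, ⟨P', p₂, rfl, hp, hPW'⟩, ⟨Q', q₂, rfl, hq, hQW'⟩⟩⟩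
  · obtain ⟨p₁, p₂, q₁, q₂, Y, hY, rfl, rfl, hne₁, hne₂, -⟩ := id h3
    obtain ⟨W₁, W₂, hW₁h, hW₁l, hW₂h, hW₂l, hcyc⟩ := exists_cut_of_subwords_bar
      (hP.infix ⟨[p₁], [p₂], rfl⟩) hY hPW hQW hne₁ hne₂
    exact ⟨(W₁, W₂), .inr ⟨h3, p₁, p₂, q₁, q₂, Y, Word.bar Y, hY, by simpa using hY, rfl, rfl,
      hW₁h, hW₁l, hW₂h, hW₂l, hcyc⟩⟩

lemma deltaPair_deltaW (h : ∃ W : Word n × Word n, DeltaPair 𝒪 𝒲 P Q W.1 W.2) :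
    DeltaPair 𝒪 𝒲 P Q (deltaW 𝒪 𝒲 P Q).1 (deltaW 𝒪 𝒲 P Q).2 := by
  rw [deltaW, dif_pos h]
  exact h.choose_spec

end Delta

/-- For `(P,Q) ∈ 𝕃ℙ₁(𝒲)`, the cyclic words `δ₁(P,Q)` and
`δ₂(P,Q)` are non-empty and reduced. -/
theorem delta_reduced (n : ℕ) (𝒪 : CWord n) (h𝒪 : SurfaceSymbol 𝒪)
    (𝒲 : CWord n) (hW : CReduced 𝒲) (P Q : Word n) (h : LP1 𝒪 𝒲 P Q) :
    delta1 𝒪 𝒲 P Q ≠ Cycle.nil ∧ delta2 𝒪 𝒲 P Q ≠ Cycle.nil ∧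
      CReduced (delta1 𝒪 𝒲 P Q) ∧ CReduced (delta2 𝒪 𝒲 P Q) := by
  obtain ⟨h₁, h₂⟩ := (deltaPair_deltaW (exists_deltaPair h𝒪 h)).cReduced h𝒪 hW h.1.1 h.1.2.1
  exact ⟨h₁.1, h₂.1, h₁, h₂⟩

end CyclicWords
end

section
/- Let 𝒱 and 𝒲 be reduced cyclic words and let (P,Q) ∈ 𝕃ℙ₂(𝒱,𝒲) be a linked pair of type (2) with P = p₁Xp₂ and Q = q₁Xq₂, and let V₁ and W₁ be the linear representatives of 𝒱 and 𝒲 obtained by cutting immediately before p₂ and immediately before q₂ respectively. Then there exist linked pairs (P₁,Q₁) ∈ 𝕃ℙ₂(γ(P,Q),𝒲) and (P₂,Q₂) ∈ 𝕃ℙ₂(𝒱,γ(P,Q)) with P₁ = p₁XW₁p₂, Q₁ = q₁XW₁q₂, P₂ = p₁XV₁p₂ and Q₂ = q₁XV₁q₂. -/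
open List

namespace CyclicWords

/-!
Write `P = p₁Xp₂` and `Q = q₁Xq₂`. Since `V₁` starts with `p₂` and `p₁X` ends a power of `V₁`
(and likewise for `W₁`, `q₂`, `q₁X`), the words `V₁` and `W₁` both end with the last letter of `X`.
Hence inserting `W₁` or `V₁` after `X` keeps both words freely reduced and leaves the first and last
letters of the middle part, and so the type-(2) condition, unchanged.

For the occurrences, `p₁X` is a suffix of a power of `V₁` whose tail `X` is a suffix of a power of
`W₁`; peeling off copies of `V₁` and `W₁` alternately from the right shows that `p₁X` is a suffix of
a power of `W₁V₁`, so `p₁XW₁p₂` occurs in a power of `W₁V₁`, a representative of `γ(P,Q)`.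
Symmetrically `q₁XV₁q₂` occurs in a power of `V₁W₁`, while `q₁XW₁q₂` and `p₁XV₁p₂` occur in powers
of `W₁` and `V₁`. Any subword of a power of a word `R` is a prefix of a power of a rotation of `R`,
which yields the required length window.
-/

variable {n : ℕ}

@[simp]
lemma wpow_zero (V : Word n) : wpow V 0 = [] := rfl

lemma wpow_succ (V : Word n) (a : ℕ) : wpow V (a + 1) = wpow V a ++ V := by
  simp [wpow, replicate_succ']

lemma wpow_succ' (V : Word n) (a : ℕ) : wpow V (a + 1) = V ++ wpow V a := by
  simp [wpow, replicate_succ]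

lemma wpow_add (V : Word n) (a b : ℕ) : wpow V (a + b) = wpow V a ++ wpow V b := by
  rw [wpow, replicate_add, flatten_append]; rfl

@[simp]
lemma length_wpow (V : Word n) (a : ℕ) : (wpow V a).length = a * V.length := by
  induction a with
  | zero => simp
  | succ a ih => rw [wpow_succ, length_append, ih, Nat.succ_mul]

lemma wpow_prefix_wpow (V : Word n) {a b : ℕ} (h : a ≤ b) : wpow V a <+: wpow V b := by
  obtain ⟨c, rfl⟩ := Nat.exists_eq_add_of_le h
  exact ⟨wpow V c, (wpow_add V a c).symm⟩

lemma append_wpow_append (A B : Word n) (m : ℕ) :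
    A ++ wpow (B ++ A) m = wpow (A ++ B) m ++ A := by
  induction m with
  | zero => simp
  | succ m ih => rw [wpow_succ, wpow_succ, ← append_assoc, ih]; simp

lemma getLast?_wpow {V : Word n} {a : ℕ} (ha : a ≠ 0) : (wpow V a).getLast? = V.getLast? := by
  obtain ⟨a, rfl⟩ := Nat.exists_eq_succ_of_ne_zero ha
  rcases eq_or_ne V [] with rfl | hV
  · simp [wpow]
  · rw [wpow_succ, getLast?_append_of_ne_nil _ hV]

lemma getLast?_eq_of_suffix_wpow {V Y : Word n} {a : ℕ} (h : Y <:+ wpow V a) (hY : Y ≠ []) :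
    Y.getLast? = V.getLast? := by
  have ha : a ≠ 0 := by
    rintro rfl
    exact hY (eq_nil_of_suffix_nil h)
  obtain ⟨C, hC⟩ := h
  rw [← getLast?_wpow (V := V) ha, ← hC, getLast?_append_of_ne_nil _ hY]

/-- A suffix of a power of `V` has period `V.length`. -/
lemma suffix_drop_append_of_suffix_wpow {V X : Word n} {a : ℕ} (h : X <:+ wpow V a) :
    X <:+ X.drop V.length ++ V := by
  cases a with
  | zero => simp [eq_nil_of_suffix_nil h]
  | succ a =>
    rw [wpow_succ] at h
    rcases le_total X.length V.length with hle | hle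
    · exact (suffix_of_suffix_length_le h (suffix_append _ _) hle).trans (suffix_append _ _)
    obtain ⟨T, rfl⟩ := suffix_of_suffix_length_le (suffix_append _ _) h hle
    have hT : T <:+ V ++ wpow V a := by
      obtain ⟨C, hC⟩ := h
      have hCT : C ++ T = wpow V a := (append_left_inj V).1 (by rw [append_assoc, hC])
      exact ⟨V ++ C, by rw [append_assoc, hCT]⟩
    have hdrop : (T ++ V).drop V.length <:+ V ++ wpow V a := by
      rw [← wpow_succ', wpow_succ]
      exact (drop_suffix _ _).trans h
    have heq : (T ++ V).drop V.length = T :=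
      ((suffix_of_suffix_length_le hT hdrop (by simp)).eq_of_length (by simp)).symm
    rw [heq]

lemma exists_suffix_wpow_append {V W X : Word n} {a b : ℕ} (hV : V ≠ []) (hW : W ≠ [])
    (hXV : X <:+ wpow V a) (hXW : X.drop V.length <:+ wpow W b) :
    ∃ t, X <:+ wpow (W ++ V) t := by
  obtain ⟨s, hs⟩ : ∃ s, X.drop V.length <:+ wpow (V ++ W) s := by
    by_cases hXlen : X.length ≤ V.length
    · exact ⟨0, by simp [drop_eq_nil_of_le hXlen]⟩
    · exact exists_suffix_wpow_append hW hV hXW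
        ((drop_suffix _ _).trans ((drop_suffix _ _).trans hXV))
  obtain ⟨C, hC⟩ := hs
  refine ⟨s + 1, (suffix_drop_append_of_suffix_wpow hXV).trans ⟨W ++ C, ?_⟩⟩
  rw [wpow_succ', append_assoc, append_assoc, append_wpow_append, ← hC]
  simp
termination_by X.length
decreasing_by
  have := length_pos_of_ne_nil hV
  simp only [length_drop]
  omega

lemma exists_cons_suffix_wpow_append {V W X : Word n} {x : Letter n} {a b : ℕ} (hV : V ≠ [])
    (hW : W ≠ []) (hXV : x :: X <:+ wpow V a) (hXW : X <:+ wpow W b) :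
    ∃ t, x :: X <:+ wpow (W ++ V) t := by
  refine exists_suffix_wpow_append (b := b) hV hW hXV ?_
  obtain ⟨k, hk⟩ := Nat.exists_eq_succ_of_ne_zero (length_pos_of_ne_nil hV).ne'
  rw [hk, drop_succ_cons]
  exact (drop_suffix _ _).trans hXW

lemma cyc_append_comm (A B : Word n) : cyc (A ++ B) = cyc (B ++ A) :=
  Cycle.coe_eq_coe.2 isRotated_append

lemma clen_cyc (W : Word n) : clen (cyc W) = W.length :=
  Cycle.length_coe W

lemma exists_cyc_eq_prefix_of_infix_wpow {R Z : Word n} {m : ℕ} (h : Z <:+: wpow R m) :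
    ∃ R', cyc R' = cyc R ∧ Z <+: wpow R' m := by
  obtain ⟨A, B, hAB⟩ := h
  induction m generalizing A with
  | zero =>
    obtain ⟨-, rfl, -⟩ : A = [] ∧ Z = [] ∧ B = [] := by simpa using hAB
    exact ⟨R, rfl, nil_prefix⟩
  | succ m ih =>
    rw [append_assoc, wpow_succ', append_eq_append_iff] at hAB
    rcases hAB with ⟨C, rfl, hZB⟩ | ⟨A', rfl, hrest⟩
    · refine ⟨C ++ A, cyc_append_comm _ _, ?_⟩
      have hZ : Z <+: wpow (C ++ A) m ++ C := by
        rw [← append_wpow_append, ← hZB]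
        exact prefix_append _ _
      rw [wpow_succ]
      exact hZ.trans ⟨A, by simp⟩
    · obtain ⟨R', hR', hZ⟩ := ih A' (by rw [hrest, append_assoc])
      exact ⟨R', hR', hZ.trans (wpow_prefix_wpow R' m.le_succ)⟩

/-- `P` is an occurrence of a subword of `𝒱ʲ` with `l(𝒱^{j-1}) < l(P) ≤ l(𝒱ʲ)`. -/
def SubwordLeastPow (P : Word n) (𝒱 : CWord n) : Prop :=
  ∃ j, 0 < j ∧ SubwordPow P 𝒱 j ∧ (j - 1) * clen 𝒱 < P.length ∧ P.length ≤ j * clen 𝒱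

lemma exists_sub_one_mul_lt_le_mul {d m : ℕ} (hd : 0 < d) (hm : 0 < m) :
    ∃ k, 0 < k ∧ (k - 1) * d < m ∧ m ≤ k * d := by
  refine ⟨(m - 1) / d + 1, Nat.succ_pos _, ?_, ?_⟩
  · have := Nat.div_mul_le_self (m - 1) d
    simp only [Nat.add_sub_cancel]
    omega
  · have := Nat.lt_div_mul_add (a := m - 1) hd
    rw [Nat.succ_mul]
    omega

lemma subwordLeastPow_cyc_of_infix_wpow {R Z : Word n} {m : ℕ} (hR : R ≠ []) (hZ : Z ≠ [])
    (h : Z <:+: wpow R m) : SubwordLeastPow Z (cyc R) := by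
  obtain ⟨R', hR', hZR'⟩ := exists_cyc_eq_prefix_of_infix_wpow h
  have hlen : R'.length = R.length := by simpa [clen_cyc] using congrArg clen hR'
  obtain ⟨k, hk, hlo, hhi⟩ :=
    exists_sub_one_mul_lt_le_mul (length_pos_of_ne_nil hR) (length_pos_of_ne_nil hZ)
  refine ⟨k, hk, ⟨R', hR', ?_⟩, by rwa [clen_cyc], by rwa [clen_cyc]⟩
  have hmax := hZR'.trans (wpow_prefix_wpow R' (le_max_left m k))
  exact (prefix_of_prefix_length_le hmax (wpow_prefix_wpow R' (le_max_right m k))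
    (by simpa [hlen] using hhi)).isInfix

lemma infix_append_append_of_suffix {Y L A B : Word n} {b : Letter n} (hY : Y <:+ L)
    (hB : B.head? = some b) : Y ++ A ++ [b] <:+: L ++ A ++ B := by
  obtain ⟨C, rfl⟩ := hY
  obtain ⟨B', rfl⟩ := head?_eq_some_iff.1 hB
  exact ⟨C, B', by simp⟩

lemma cons_append_infix_wpow_succ {A B X : Word n} {a b : Letter n} {t : ℕ}
    (h : a :: X <:+ wpow (A ++ B) t) (hB : B.head? = some b) :
    a :: (X ++ A) ++ [b] <:+: wpow (A ++ B) (t + 1) := by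
  simpa [wpow_succ] using infix_append_append_of_suffix (A := A) h hB

lemma cons_append_infix_wpow_add_two {R X : Word n} {a b : Letter n} {t : ℕ}
    (h : a :: X <:+ wpow R t) (hR : R.head? = some b) :
    a :: (X ++ R) ++ [b] <:+: wpow R (t + 2) := by
  simpa [wpow_succ] using infix_append_append_of_suffix (A := R) h hR

lemma CutEnds.cons_append {V X : Word n} {a b : Letter n} (h : CutEnds V (a :: X ++ [b])) :
    V.head? = some b ∧ ∃ j, a :: X <:+ wpow V j := by
  obtain ⟨P', b', j, hP, hb, hj⟩ := h
  obtain ⟨rfl, hbb'⟩ := append_inj' hP rfl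
  rw [singleton_inj.1 hbb']
  exact ⟨hb, j, hj⟩

lemma FreelyReduced.cons_append_append {a b c d : Letter n} {X M : Word n}
    (hP : FreelyReduced (a :: X ++ [c])) (hQ : FreelyReduced (b :: X ++ [d]))
    (hM : FreelyReduced M) (hMd : M.head? = some d) (hML : M.getLast? = X.getLast?) :
    FreelyReduced (a :: (X ++ M) ++ [c]) := by
  obtain ⟨x, hx⟩ : ∃ x, X.getLast? = some x := by
    obtain ⟨M', rfl⟩ := head?_eq_some_iff.1 hMd
    exact Option.ne_none_iff_exists'.1 (by simp [← hML])
  have hlast : ∀ e, (e :: X).getLast? = some x := by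
    intro e
    simp [getLast?_cons, hx]
  obtain ⟨hPX, -, hc⟩ := isChain_append.1 hP
  obtain ⟨-, -, hd⟩ := isChain_append.1 hQ
  have hMc : FreelyReduced (M ++ [c]) :=
    hM.append (isChain_singleton c) (by simpa [hML, hx] using hc x (hlast a))
  rw [show a :: (X ++ M) ++ [c] = (a :: X) ++ (M ++ [c]) by simp]
  refine hPX.append hMc ?_
  simpa [hlast, head?_append, hMd] using hd x (hlast b)

lemma linkedType2_cons_append_iff {𝒪 : CWord n} {p₁ p₂ q₁ q₂ : Letter n} {X : Word n} :
    LinkedType2 𝒪 (p₁ :: X ++ [p₂]) (q₁ :: X ++ [q₂]) ↔ X ≠ [] ∧ p₁ ≠ q₁ ∧ p₂ ≠ q₂ ∧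
      ∀ x₁ x₂ : Letter n, X.head? = some x₁ → X.getLast? = some x₂ →
        o 𝒪 (cyc [Letter.bar p₁, Letter.bar q₁, x₁]) =
          o 𝒪 (cyc [p₂, q₂, Letter.bar x₂]) := by
  constructor
  · rintro ⟨a₁, a₂, b₁, b₂, Y, hY, hP, hQ, h⟩
    obtain ⟨hP, hp₂⟩ := append_inj' hP rfl
    obtain ⟨hQ, hq₂⟩ := append_inj' hQ rfl
    obtain ⟨rfl, rfl⟩ := cons.inj hP
    obtain ⟨rfl, -⟩ := cons.inj hQ
    rw [singleton_inj] at hp₂ hq₂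
    subst hp₂ hq₂
    exact ⟨hY, h⟩
  · rintro ⟨hX, h⟩
    exact ⟨p₁, p₂, q₁, q₂, X, hX, rfl, rfl, h⟩

lemma LinkedType2.append_middle {𝒪 : CWord n} {p₁ p₂ q₁ q₂ : Letter n} {X M : Word n}
    (h : LinkedType2 𝒪 (p₁ :: X ++ [p₂]) (q₁ :: X ++ [q₂])) (hML : M.getLast? = X.getLast?) :
    LinkedType2 𝒪 (p₁ :: (X ++ M) ++ [p₂]) (q₁ :: (X ++ M) ++ [q₂]) := by
  obtain ⟨hX, hp, hq, ho⟩ := linkedType2_cons_append_iff.1 h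
  refine linkedType2_cons_append_iff.2 ⟨by simp [hX], hp, hq, fun x₁ x₂ h₁ h₂ => ho x₁ x₂ ?_ ?_⟩
  · obtain ⟨x, X', rfl⟩ := exists_cons_of_ne_nil hX
    simpa using h₁
  · rwa [getLast?_append, hML, Option.or_self] at h₂

lemma IsLinked.append_middle {𝒪 : CWord n} {p₁ p₂ q₁ q₂ : Letter n} {X M : Word n}
    (h : IsLinked 𝒪 (p₁ :: X ++ [p₂]) (q₁ :: X ++ [q₂]))
    (h2 : LinkedType2 𝒪 (p₁ :: X ++ [p₂]) (q₁ :: X ++ [q₂])) (hM : FreelyReduced M)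
    (hMd : M.head? = some p₂ ∨ M.head? = some q₂) (hML : M.getLast? = X.getLast?) :
    IsLinked 𝒪 (p₁ :: (X ++ M) ++ [p₂]) (q₁ :: (X ++ M) ++ [q₂]) := by
  obtain ⟨hP, hQ, -⟩ := h
  have hfr : ∀ {a c : Letter n}, FreelyReduced (a :: X ++ [c]) →
      FreelyReduced (a :: (X ++ M) ++ [c]) := by
    rcases hMd with hMd | hMd
    exacts [fun h => h.cons_append_append hP hM hMd hML,
      fun h => h.cons_append_append hQ hM hMd hML]
  exact ⟨hfr hP, hfr hQ, by simp only [length_append, length_cons]; omega,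
    by simp only [length_append, length_cons]; omega, Or.inr (Or.inl (h2.append_middle hML))⟩

lemma lp2_of_isLinked {𝒪 𝒱 𝒲 : CWord n} {P Q : Word n} (h : IsLinked 𝒪 P Q)
    (hP : SubwordLeastPow P 𝒱) (hQ : SubwordLeastPow Q 𝒲) : LP2 𝒪 𝒱 𝒲 P Q := by
  obtain ⟨j, hj, hPj, hPlo, hPhi⟩ := hP
  obtain ⟨k, hk, hQk, hQlo, hQhi⟩ := hQ
  exact ⟨h, j, k, hj, hk, hPj, hQk, hPlo, hPhi, hQlo, hQhi⟩

theorem lp2_gamma_pairs_general (n : ℕ) (𝒪 𝒱 𝒲 : CWord n)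
    (hV : CReduced 𝒱) (hW : CReduced 𝒲) (P Q : Word n) (h : LP2 𝒪 𝒱 𝒲 P Q)
    (ht2 : LinkedType2 𝒪 P Q) (p₁ p₂ q₁ q₂ : Letter n) (X V₁ W₁ : Word n)
    (hP : P = p₁ :: X ++ [p₂]) (hQ : Q = q₁ :: X ++ [q₂])
    (hV₁ : cyc V₁ = 𝒱) (hcutP : CutEnds V₁ P)
    (hW₁ : cyc W₁ = 𝒲) (hcutQ : CutEnds W₁ Q) :
    LP2 𝒪 (cyc (V₁ ++ W₁)) 𝒲
        (p₁ :: (X ++ W₁) ++ [p₂]) (q₁ :: (X ++ W₁) ++ [q₂]) ∧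
    LP2 𝒪 𝒱 (cyc (V₁ ++ W₁))
        (p₁ :: (X ++ V₁) ++ [p₂]) (q₁ :: (X ++ V₁) ++ [q₂]) := by
  subst hP hQ hV₁ hW₁
  have hX : X ≠ [] := (linkedType2_cons_append_iff.1 ht2).1
  obtain ⟨hV₁p₂, j, hXV⟩ := hcutP.cons_append
  obtain ⟨hW₁q₂, k, hXW⟩ := hcutQ.cons_append
  have hV₁ne : V₁ ≠ [] := by rintro rfl; simp at hV₁p₂
  have hW₁ne : W₁ ≠ [] := by rintro rfl; simp at hW₁q₂
  have hXV' : X <:+ wpow V₁ j := (suffix_cons _ _).trans hXV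
  have hXW' : X <:+ wpow W₁ k := (suffix_cons _ _).trans hXW
  have hlastV := (getLast?_eq_of_suffix_wpow hXV' hX).symm
  have hlastW := (getLast?_eq_of_suffix_wpow hXW' hX).symm
  obtain ⟨t, hWV⟩ := exists_cons_suffix_wpow_append hV₁ne hW₁ne hXV hXW'
  obtain ⟨s, hVW⟩ := exists_cons_suffix_wpow_append hW₁ne hV₁ne hXW hXV'
  refine ⟨lp2_of_isLinked (h.1.append_middle ht2 (hW.2 W₁ rfl) (Or.inr hW₁q₂) hlastW) ?_ ?_,
    lp2_of_isLinked (h.1.append_middle ht2 (hV.2 V₁ rfl) (Or.inl hV₁p₂) hlastV) ?_ ?_⟩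
  · rw [cyc_append_comm]
    exact subwordLeastPow_cyc_of_infix_wpow (by simp [hW₁ne]) (by simp)
      (cons_append_infix_wpow_succ hWV hV₁p₂)
  · exact subwordLeastPow_cyc_of_infix_wpow hW₁ne (by simp)
      (cons_append_infix_wpow_add_two hXW hW₁q₂)
  · exact subwordLeastPow_cyc_of_infix_wpow hV₁ne (by simp)
      (cons_append_infix_wpow_add_two hXV hV₁p₂)
  · exact subwordLeastPow_cyc_of_infix_wpow (by simp [hV₁ne]) (by simp)
      (cons_append_infix_wpow_succ hVW hW₁q₂)

/-- For a type-(2) pair `(P,Q) ∈ 𝕃ℙ₂(𝒱,𝒲)` with `P = p₁Xp₂`,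
`Q = q₁Xq₂` and representatives `V₁`, `W₁` cut before `p₂`, `q₂` (so that
`γ(P,Q) = c(V₁W₁)`), the pairs `(P₁,Q₁) = (p₁XW₁p₂, q₁XW₁q₂)` and
`(P₂,Q₂) = (p₁XV₁p₂, q₁XV₁q₂)` satisfy `(P₁,Q₁) ∈ 𝕃ℙ₂(γ(P,Q),𝒲)` and
`(P₂,Q₂) ∈ 𝕃ℙ₂(𝒱,γ(P,Q))`. -/
theorem lp2_gamma_pairs (n : ℕ) (𝒪 𝒱 𝒲 : CWord n) (h𝒪 : SurfaceSymbol 𝒪)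
    (hV : CReduced 𝒱) (hW : CReduced 𝒲) (P Q : Word n) (h : LP2 𝒪 𝒱 𝒲 P Q)
    (ht2 : LinkedType2 𝒪 P Q) (p₁ p₂ q₁ q₂ : Letter n) (X V₁ W₁ : Word n)
    (hP : P = p₁ :: X ++ [p₂]) (hQ : Q = q₁ :: X ++ [q₂])
    (hV₁ : cyc V₁ = 𝒱) (hcutP : CutEnds V₁ P)
    (hW₁ : cyc W₁ = 𝒲) (hcutQ : CutEnds W₁ Q) :
    LP2 𝒪 (cyc (V₁ ++ W₁)) 𝒲
        (p₁ :: (X ++ W₁) ++ [p₂]) (q₁ :: (X ++ W₁) ++ [q₂]) ∧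
    LP2 𝒪 𝒱 (cyc (V₁ ++ W₁))
        (p₁ :: (X ++ V₁) ++ [p₂]) (q₁ :: (X ++ V₁) ++ [q₂]) :=
  lp2_gamma_pairs_general n 𝒪 𝒱 𝒲 hV hW P Q h ht2 p₁ p₂ q₁ q₂ X V₁ W₁ hP hQ hV₁ hcutP hW₁ hcutQ

end CyclicWords
end
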